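/- arXiv:2412.17330 — 3 statements merged into one kernel-verified Lean document; each statement's English description precedes it below -/
import Mathlib

section
/- Let M ≥ 0 be a real number and let (Q_t)_{t∈ℕ} be a sequence of nonempty finite multisets of real numbers such that: (i) max Q_0 − min Q_0 ≤ M, and (ii) for every t, Q_{t+1} = (Q_t − {a_t}) + S_t, where a_t = min Q_t (one occurrence of a minimal element is removed) and S_t is a multiset of reals each lying in the half-open interval (a_t, a_t + M]. Then for every t and every x ∈ Q_t, x − min Q_t ≤ M. -/
/-- Finitely-branching trees with nodes labeled by elements of `R` (derivation trees). -/
inductive Tree' (R : Type) : Type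
  | node : R → List (Tree' R) → Tree' R

/-- The label of the root node. -/
def Tree'.rootLabel {R : Type} : Tree' R → R
  | .node r _ => r

/-- A tree grammar: nonterminals `Γ`, derivation rules `R`, each rule having a
left-hand nonterminal and a list of argument nonterminals. -/
structure TreeGrammar where
  Γ : Type
  R : Type
  lhs : R → Γ
  args : R → List Γ

/-- Well-formed derivation trees (programs) of a tree grammar. -/
inductive TreeGrammar.WF (G : TreeGrammar) : Tree' G.R → Prop
  | node (r : G.R) (ts : List (Tree' G.R))
      (hlen : ts.length = (G.args r).length)
      (hwf : ∀ t ∈ ts, G.WF t)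
      (hlhs : ∀ i : ℕ, (h : i < ts.length) →
        G.lhs (ts[i].rootLabel) = (G.args r)[i]'(hlen ▸ h)) :
      G.WF (Tree'.node r ts)

/-- `p` is a program generated from the nonterminal `X`. -/
def TreeGrammar.GenFrom (G : TreeGrammar) (X : G.Γ) (p : Tree' G.R) : Prop :=
  G.WF p ∧ G.lhs p.rootLabel = X

/-- The cost of a program, extending a cost function on rules. -/
def costP {R : Type} (cost : R → ℝ) : Tree' R → ℝ
  | .node r ts => cost r + (ts.attach.map (fun t => costP cost t.1)).sum
decreasing_by
  have := List.sizeOf_lt_of_mem t.2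
  simp only [Tree'.node.sizeOf_spec]
  omega

/-- The number of nodes of a derivation tree. -/
def sizeP {R : Type} : Tree' R → ℕ
  | .node _ ts => 1 + (ts.attach.map (fun t => sizeP t.1)).sum
decreasing_by
  have := List.sizeOf_lt_of_mem t.2
  simp only [Tree'.node.sizeOf_spec]
  omega

/-- The depth of a derivation tree: number of nodes on a longest root-to-leaf path. -/
def depthP {R : Type} : Tree' R → ℕ
  | .node _ ts => 1 + (ts.attach.map (fun t => depthP t.1)).foldr max 0
decreasing_by
  have := List.sizeOf_lt_of_mem t.2
  simp only [Tree'.node.sizeOf_spec]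
  omega

/-- `p'` is a successor of `p` with respect to the nonterminal `X`:
`p'` is generated from `X`, has strictly larger cost than `p`, and no program
generated from `X` has cost strictly between the two. -/
def IsSucc (G : TreeGrammar) (cost : G.R → ℝ) (X : G.Γ) (p p' : Tree' G.R) : Prop :=
  G.GenFrom X p' ∧ costP cost p < costP cost p' ∧
    ∀ p'', G.GenFrom X p'' →
      ¬(costP cost p < costP cost p'' ∧ costP cost p'' < costP cost p')

/-- `X` occurs as the left-hand nonterminal of the rule labeling some node of the tree. -/
inductive OccursLhs (G : TreeGrammar) (X : G.Γ) : Tree' G.R → Prop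
  | here (r : G.R) (ts : List (Tree' G.R)) : G.lhs r = X → OccursLhs G X (.node r ts)
  | there (r : G.R) (ts : List (Tree' G.R)) (t : Tree' G.R) :
      t ∈ ts → OccursLhs G X t → OccursLhs G X (.node r ts)

/-- Condition (*): along every root-to-leaf path, no nonterminal occurs twice as the
left-hand nonterminal of the rules labeling the nodes on the path. -/
inductive StarCond (G : TreeGrammar) : Tree' G.R → Prop
  | node (r : G.R) (ts : List (Tree' G.R))
      (hsub : ∀ t ∈ ts, StarCond G t)
      (hnew : ∀ t ∈ ts, ¬ OccursLhs G (G.lhs r) t) :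
      StarCond G (.node r ts)

/-- `IsSubtree s t`: `s` is the subtree of `t` rooted at some node of `t`. -/
inductive IsSubtree {R : Type} : Tree' R → Tree' R → Prop
  | refl (t : Tree' R) : IsSubtree t t
  | child (s : Tree' R) (r : R) (ts : List (Tree' R)) (t : Tree' R) :
      t ∈ ts → IsSubtree s t → IsSubtree s (.node r ts)

/-- `IsStrictSubtree s t`: `s` is the subtree of `t` rooted at a strict descendant
of the root of `t`. -/
inductive IsStrictSubtree {R : Type} : Tree' R → Tree' R → Prop
  | child (s : Tree' R) (r : R) (ts : List (Tree' R)) (t : Tree' R) :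
      t ∈ ts → IsSubtree s t → IsStrictSubtree s (.node r ts)

/-- The subtree of a tree at a given position (a list of child indices), if it exists. -/
def subtreeAt {R : Type} : Tree' R → List ℕ → Option (Tree' R)
  | t, [] => some t
  | .node _ ts, i :: is =>
      match ts[i]? with
      | some t => subtreeAt t is
      | none => none

/-- Replacing the subtree at a given position by `q`. -/
def replaceAt {R : Type} : Tree' R → List ℕ → Tree' R → Tree' R
  | _, [], q => q
  | .node r ts, i :: is, q =>
      match ts[i]? with
      | some t => .node r (ts.set i (replaceAt t is q))
      | none => .node r ts

open scoped ENNReal in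
/-- The Bellman operator associated with a tree grammar and a cost function. -/
noncomputable def bellman (G : TreeGrammar) (cost : G.R → ℝ) (c : G.Γ → ℝ≥0∞) : G.Γ → ℝ≥0∞ :=
  fun X => ⨅ r ∈ {r : G.R | G.lhs r = X},
    (ENNReal.ofReal (cost r) + ((G.args r).map c).sum)

/-- the abstract queue invariant. -/
theorem stmt1 (M : ℝ) (hM : 0 ≤ M) (Q : ℕ → Multiset ℝ) (S : ℕ → Multiset ℝ)
    (hne : ∀ t, Q t ≠ 0)
    (h0 : (Q 0).toFinset.max' (Multiset.toFinset_nonempty.mpr (hne 0)) -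
          (Q 0).toFinset.min' (Multiset.toFinset_nonempty.mpr (hne 0)) ≤ M)
    (hS : ∀ t, ∀ s ∈ S t,
        (Q t).toFinset.min' (Multiset.toFinset_nonempty.mpr (hne t)) < s ∧
        s ≤ (Q t).toFinset.min' (Multiset.toFinset_nonempty.mpr (hne t)) + M)
    (hstep : ∀ t, Q (t + 1) =
        (Q t).erase ((Q t).toFinset.min' (Multiset.toFinset_nonempty.mpr (hne t))) + S t) :
    ∀ t, ∀ x ∈ Q t, x - (Q t).toFinset.min' (Multiset.toFinset_nonempty.mpr (hne t)) ≤ M := by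
  set m := fun t => (Q t).toFinset.min' (Multiset.toFinset_nonempty.mpr (hne t)) with hm
  have hmle : ∀ t, ∀ x ∈ Q t, m t ≤ x := by
    intro t x hx
    exact Finset.min'_le _ _ (Multiset.mem_toFinset.mpr hx)
  have key : ∀ t, ∀ x ∈ Q t, x ≤ m t + M := by
    intro t
    induction t with
    | zero =>
      intro x hx
      have h1 : x ≤ (Q 0).toFinset.max' (Multiset.toFinset_nonempty.mpr (hne 0)) :=
        Finset.le_max' _ _ (Multiset.mem_toFinset.mpr hx)
      linarith
    | succ t ih =>
      have hmono : m t ≤ m (t + 1) := by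
        apply Finset.le_min'
        intro y hy
        have hy' : y ∈ Q (t + 1) := Multiset.mem_toFinset.mp hy
        rw [hstep t, Multiset.mem_add] at hy'
        rcases hy' with hy' | hy'
        · exact hmle t y (Multiset.mem_of_mem_erase hy')
        · exact le_of_lt (hS t y hy').1
      intro x hx
      rw [hstep t, Multiset.mem_add] at hx
      rcases hx with hx | hx
      · have := ih x (Multiset.mem_of_mem_erase hx)
        linarith
      · have := (hS t x hx).2
        linarith
  intro t x hx
  have := key t x hx
  linarith
end

section
/- Let G be a tree grammar with finitely many nonterminals and finitely many rules, cost function with cost(r) > 0 for all rules r, and let M ≥ 0 be a constant such that cost-succ_Y(q) − cost(q) ≤ M for every nonterminal Y and every program q generated from Y having a successor wrt Y. Fix a nonterminal X, and let (Q_t)_{t∈ℕ} be a sequence of nonempty finite multisets of programs generated from X such that max cost in Q_0 − min cost in Q_0 ≤ M, and for each t, Q_{t+1} is obtained from Q_t by removing one program p of minimal cost in Q_t and inserting a multiset of successors of p wrt X. Then for every t and every program p ∈ Q_t, cost(p) − min_{p' ∈ Q_t} cost(p') ≤ M. -/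
/-- the queue invariant for Eco Search. -/
theorem stmt2 (G : TreeGrammar) [Fintype G.Γ] [Fintype G.R]
    [DecidableEq (Tree' G.R)] (cost : G.R → ℝ)
    (hpos : ∀ r, 0 < cost r) (M : ℝ) (hM : 0 ≤ M)
    (hMsucc : ∀ (Y : G.Γ) (q q' : Tree' G.R), G.GenFrom Y q → IsSucc G cost Y q q' →
      costP cost q' - costP cost q ≤ M)
    (X : G.Γ) (Q : ℕ → Multiset (Tree' G.R))
    (hne : ∀ t, Q t ≠ 0)
    (hgen : ∀ t, ∀ p ∈ Q t, G.GenFrom X p)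
    (h0 : ∀ p ∈ Q 0, ∀ q ∈ Q 0, costP cost p - costP cost q ≤ M)
    (hstep : ∀ t, ∃ p ∈ Q t, (∀ q ∈ Q t, costP cost p ≤ costP cost q) ∧
      ∃ S : Multiset (Tree' G.R), (∀ s ∈ S, IsSucc G cost X p s) ∧
        Q (t + 1) = (Q t).erase p + S) :
    ∀ t, ∀ p ∈ Q t, ∀ m ∈ Q t, (∀ q ∈ Q t, costP cost m ≤ costP cost q) →
      costP cost p - costP cost m ≤ M := by
  intro t
  induction t with
  | zero => intro p hp m hm _; exact h0 p hp m hm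
  | succ t ih =>
    obtain ⟨p, hpQ, hpmin, S, hS, hQ⟩ := hstep t
    intro q hq m hm hmmin
    have hpm : costP cost p ≤ costP cost m := by
      rw [hQ] at hm
      rcases Multiset.mem_add.1 hm with h | h
      · exact hpmin m (Multiset.mem_of_mem_erase h)
      · exact le_of_lt (hS m h).2.1
    rw [hQ] at hq
    rcases Multiset.mem_add.1 hq with h | h
    · have := ih q (Multiset.mem_of_mem_erase h) p hpQ hpmin
      linarith
    · have := hMsucc X p q (hgen t p hpQ) (hS q h)
      linarith
end

section
/- Let G be a tree grammar with finitely many nonterminals and finitely many rules, and cost function with cost(r) > 0 for every rule r. Then for every nonterminal X, the set C_X = {cost(p) : p a program generated from X} ⊆ ℝ is well-ordered by <, i.e., every nonempty subset of C_X has a least element. -/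
/-!
If every rule costs at least `ε > 0`, a program of cost at most `b` has at most `b / ε` nodes,
and over a finite set of rules there are only finitely many trees with a bounded number of nodes.
So every set of program costs meets each half-line `(-∞, b]` in a finite set, and a nonempty
subset has a least element: the minimum of its finite part below any one of its elements.
-/

open Set

theorem Set.Finite.lists_length_le {α : Type*} {S : Set α} (hS : S.Finite) (n : ℕ) :
    {l : List α | l.length ≤ n ∧ ∀ x ∈ l, x ∈ S}.Finite := by
  have := hS.to_subtype
  refine ((List.finite_length_le S n).image (List.map (↑))).subset ?_
  rintro l ⟨hlen, hl⟩
  lift l to List S using hl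
  exact ⟨l, by simpa using hlen, rfl⟩

theorem exists_min_of_finite_inter_Iic {α : Type*} [LinearOrder α] {s : Set α}
    (hs : ∀ b, (s ∩ Iic b).Finite) (hne : s.Nonempty) : ∃ m ∈ s, ∀ x ∈ s, m ≤ x := by
  obtain ⟨b, hb⟩ := hne
  obtain ⟨m, ⟨hms, hmb⟩, hmin⟩ := exists_min_image _ id (hs b) ⟨b, hb, le_rfl⟩
  refine ⟨m, hms, fun x hx => ?_⟩
  rcases le_total x b with hxb | hbx
  · exact hmin x ⟨hx, hxb⟩
  · exact hmb.trans hbx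

section Trees

variable {R : Type}

@[induction_eliminator]
theorem Tree'.induction {motive : Tree' R → Prop}
    (node : ∀ r ts, (∀ t ∈ ts, motive t) → motive (.node r ts)) : ∀ p, motive p
  | .node r ts => node r ts fun t _ => Tree'.induction node t

@[simp]
theorem sizeP_node (r : R) (ts : List (Tree' R)) :
    sizeP (.node r ts) = 1 + (ts.map sizeP).sum := by
  rw [sizeP]
  simp

@[simp]
theorem costP_node (cost : R → ℝ) (r : R) (ts : List (Tree' R)) :
    costP cost (.node r ts) = cost r + (ts.map (costP cost)).sum := by
  rw [costP]
  simp

theorem one_le_sizeP (p : Tree' R) : 1 ≤ sizeP p := by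
  cases p
  simp

theorem finite_setOf_sizeP_le [Finite R] (n : ℕ) : {p : Tree' R | sizeP p ≤ n}.Finite := by
  induction n with
  | zero =>
    refine finite_empty.subset fun p (hp : sizeP p ≤ 0) => ?_
    have := one_le_sizeP p
    omega
  | succ n ih =>
    refine ((finite_univ.prod (ih.lists_length_le n)).image
      fun q : R × List (Tree' R) => Tree'.node q.1 q.2).subset ?_
    rintro ⟨r, ts⟩ (hp : sizeP _ ≤ n + 1)
    have hsum : (ts.map sizeP).sum ≤ n := by rw [sizeP_node] at hp; omega
    have hlen : ts.length ≤ (ts.map sizeP).sum := by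
      simpa using List.length_le_sum_of_one_le (ts.map sizeP) (by simp [one_le_sizeP])
    refine ⟨(r, ts), ⟨mem_univ r, hlen.trans hsum, fun t ht => ?_⟩, rfl⟩
    exact (List.le_sum_of_mem (List.mem_map_of_mem ht)).trans hsum

theorem mul_sizeP_le_costP {cost : R → ℝ} {ε : ℝ} (hε : ∀ r, ε ≤ cost r) (p : Tree' R) :
    ε * sizeP p ≤ costP cost p := by
  induction p with
  | node r ts ih =>
    calc ε * (sizeP (.node r ts) : ℝ) = ε + (ts.map fun t => ε * sizeP t).sum := by
          simp [mul_add, List.sum_map_mul_left, Function.comp_def]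
      _ ≤ cost r + (ts.map (costP cost)).sum := add_le_add (hε r) (List.sum_le_sum ih)
      _ = costP cost (.node r ts) := (costP_node cost r ts).symm

theorem finite_setOf_costP_le [Finite R] {cost : R → ℝ} (hpos : ∀ r, 0 < cost r) (b : ℝ) :
    {p : Tree' R | costP cost p ≤ b}.Finite := by
  rcases isEmpty_or_nonempty R with hR | hR
  · have : IsEmpty (Tree' R) := ⟨fun p => IsEmpty.false p.rootLabel⟩
    exact toFinite _
  obtain ⟨r₀, hr₀⟩ := Finite.exists_min cost
  refine (finite_setOf_sizeP_le ⌈b / cost r₀⌉₊).subset fun p hp => ?_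
  have hsize : cost r₀ * sizeP p ≤ b := (mul_sizeP_le_costP hr₀ p).trans hp
  exact_mod_cast ((le_div_iff₀' (hpos r₀)).mpr hsize).trans (Nat.le_ceil _)

end Trees

theorem stmt4_general (G : TreeGrammar) [Fintype G.R] (cost : G.R → ℝ)
    (hpos : ∀ r, 0 < cost r) (X : G.Γ) :
    ∀ s ⊆ {c : ℝ | ∃ p : Tree' G.R, G.GenFrom X p ∧ costP cost p = c},
      s.Nonempty → ∃ m ∈ s, ∀ x ∈ s, m ≤ x := by
  intro s hs hne
  refine exists_min_of_finite_inter_Iic (fun b => ?_) hne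
  refine ((finite_setOf_costP_le hpos b).image (costP cost)).subset ?_
  rintro c ⟨hc, hcb⟩
  obtain ⟨p, -, rfl⟩ := hs hc
  exact ⟨p, hcb, rfl⟩

/-- the set of costs of programs generated from `X` is well-ordered by `<`:
every nonempty subset has a least element. -/
theorem stmt4 (G : TreeGrammar) [Fintype G.Γ] [Fintype G.R] (cost : G.R → ℝ)
    (hpos : ∀ r, 0 < cost r) (X : G.Γ) :
    ∀ s ⊆ {c : ℝ | ∃ p : Tree' G.R, G.GenFrom X p ∧ costP cost p = c},
      s.Nonempty → ∃ m ∈ s, ∀ x ∈ s, m ≤ x :=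
  stmt4_general G cost hpos X
end
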